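/- Let N be a normal subgroup of a finite group C, let χ be a complex irreducible character of N, and let e_ℚ(χ) be the primitive central idempotent of ℚN associated to χ. Suppose x ∈ C centralizes e_ℚ(χ) and x α x^{-1} = α for every α in the center of ℚN e_ℚ(χ). Then the conjugate character χ^x, defined by χ^x(n) = χ(x n x^{-1}), equals χ. -/

import Mathlib

open scoped Classical
set_option linter.unusedSectionVars false

noncomputable section

namespace PaperGSM

variable {G : Type} [Group G] [Fintype G]

/-- `Ĥ = (1/|N|) ∑_{x ∈ N} x` in the rational group algebra. -/
def hat (N : Subgroup G) : MonoidAlgebra ℚ G :=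
  (Nat.card N : ℚ)⁻¹ • ∑ x : N, MonoidAlgebra.of ℚ G (x : G)

/-- conjugation of `X` by `y`, as an equivalence of the subtype. -/
def conjEquiv (X : Subgroup G) (y : G) (h : ∀ x ∈ X, y⁻¹ * x * y ∈ X)
    (h' : ∀ x ∈ X, y * x * y⁻¹ ∈ X) : X ≃ X where
  toFun x := ⟨y⁻¹ * x * y, h x x.2⟩
  invFun x := ⟨y * x * y⁻¹, h' x x.2⟩
  left_inv x := Subtype.ext (by group)
  right_inv x := Subtype.ext (by group)

lemma sum_conj_eq (X : Subgroup G) (y : G) (h : ∀ x ∈ X, y⁻¹ * x * y ∈ X)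
    (h' : ∀ x ∈ X, y * x * y⁻¹ ∈ X) :
    ∑ x : X, MonoidAlgebra.of ℚ G ((x : G) * y)
      = ∑ x : X, MonoidAlgebra.of ℚ G (y * (x : G)) := by
  apply Fintype.sum_equiv (conjEquiv X y h h')
  intro x
  have : (x : G) * y = y * ((conjEquiv X y h h') x : G) := by
    simp only [conjEquiv, Equiv.coe_fn_mk]
    group
  rw [this]

lemma hat_comm (X Y : Subgroup G) (h : ∀ y ∈ Y, ∀ x ∈ X, y⁻¹ * x * y ∈ X) :
    hat X * hat Y = hat Y * hat X := by
  have key : (∑ x : X, MonoidAlgebra.of ℚ G (x : G)) * (∑ y : Y, MonoidAlgebra.of ℚ G (y : G))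
      = (∑ y : Y, MonoidAlgebra.of ℚ G (y : G)) * (∑ x : X, MonoidAlgebra.of ℚ G (x : G)) := by
    rw [Finset.sum_mul_sum, Finset.sum_mul_sum]
    have l : ∀ (x : X) (y : Y),
        MonoidAlgebra.of ℚ G (x : G) * MonoidAlgebra.of ℚ G (y : G)
          = MonoidAlgebra.of ℚ G ((x : G) * (y : G)) := fun x y => (map_mul _ _ _).symm
    calc ∑ x : X, ∑ y : Y, MonoidAlgebra.of ℚ G (x : G) * MonoidAlgebra.of ℚ G (y : G)
        = ∑ y : Y, ∑ x : X, MonoidAlgebra.of ℚ G ((x : G) * (y : G)) := by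
          rw [Finset.sum_comm]
          exact Finset.sum_congr rfl fun y _ => Finset.sum_congr rfl fun x _ => l x y
      _ = ∑ y : Y, ∑ x : X, MonoidAlgebra.of ℚ G ((y : G) * (x : G)) := by
          refine Finset.sum_congr rfl fun y _ => ?_
          refine sum_conj_eq X (y : G) (fun x hx => h y y.2 x hx) (fun x hx => ?_)
          have := h (y : G)⁻¹ (Y.inv_mem y.2) x hx
          simpa using this
      _ = ∑ y : Y, ∑ x : X, MonoidAlgebra.of ℚ G (y : G) * MonoidAlgebra.of ℚ G (x : G) := by
          exact Finset.sum_congr rfl fun y _ => Finset.sum_congr rfl fun x _ => map_mul (MonoidAlgebra.of ℚ G) _ _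
  unfold hat
  rw [smul_mul_smul_comm, smul_mul_smul_comm, key, mul_comm ((Nat.card X : ℚ)⁻¹)]

instance : Fintype (Subgroup G) :=
  Fintype.ofInjective (fun H : Subgroup G => (H : Set G)) fun _ _ h => SetLike.coe_injective h

/-- `N` is a normal subgroup of `B` (both given as subgroups of the ambient group `G`). -/
def NormalIn (N B : Subgroup G) : Prop :=
  N ≤ B ∧ ∀ b ∈ B, ∀ x ∈ N, b * x * b⁻¹ ∈ N

/-- `L` is a minimal normal subgroup of `H` containing `K` properly. -/
def IsMinNormalOver (H K L : Subgroup G) : Prop :=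
  NormalIn L H ∧ K < L ∧ ∀ M : Subgroup G, NormalIn M H → K < M → M ≤ L → M = L

/-- `ε(H,K)`. -/
def eps (H K : Subgroup G) : MonoidAlgebra ℚ G :=
  if H = K then hat K
  else Finset.noncommProd (Finset.univ.filter (IsMinNormalOver H K))
    (fun L => hat K - hat L) (by
      intro L hL M hM _
      simp only [Finset.coe_filter, Set.mem_setOf_eq, Finset.mem_univ, true_and] at hL hM
      have hKL : K ≤ L := le_of_lt hL.2.1
      have hKH : K ≤ H := hKL.trans hL.1.1
      have normconj : ∀ (A : Subgroup G), NormalIn A H → ∀ y ∈ K, ∀ x ∈ A, y⁻¹ * x * y ∈ A := by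
        intro A hA y hy x hx
        have := hA.2 y⁻¹ (H.inv_mem (hKH hy)) x hx
        simpa using this
      have cKK : Commute (hat K) (hat K) := Commute.refl _
      have cKL : Commute (hat K) (hat L) :=
        (hat_comm L K (normconj L hL.1)).symm
      have cKM : Commute (hat K) (hat M) :=
        (hat_comm M K (normconj M hM.1)).symm
      have cLM : Commute (hat L) (hat M) := by
        refine hat_comm L M ?_
        intro y hy x hx
        have := hL.1.2 y⁻¹ (H.inv_mem (hM.1.1 hy)) x hx
        simpa using this
      exact (cKK.sub_right cKM).sub_left (cKL.symm.sub_right cLM))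

/-- conjugation of an element of the group algebra by a group element. -/
def conjEl (g : G) (α : MonoidAlgebra ℚ G) : MonoidAlgebra ℚ G :=
  MonoidAlgebra.of ℚ G g * α * MonoidAlgebra.of ℚ G g⁻¹

/-- `e(B,H,K)`: the sum of the distinct `B`-conjugates of `ε(H,K)`. -/
def eGHK (B H K : Subgroup G) : MonoidAlgebra ℚ G :=
  ∑ a ∈ Finset.image (fun b : B => conjEl (b : G) (eps H K)) Finset.univ, a


/-- linear extension of a character to the rational group algebra, valued in `ℂ`. -/
def extChar {Γ : Type*} [Group Γ] [Fintype Γ] (χ : Γ → ℂ) (α : MonoidAlgebra ℚ Γ) : ℂ :=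
  ∑ g : Γ, (α.coeff g : ℂ) * χ g

/-- `e` is a primitive central idempotent of the rational group algebra. -/
def IsPCI {Γ : Type*} [Group Γ] (e : MonoidAlgebra ℚ Γ) : Prop :=
  (∀ α, e * α = α * e) ∧ e * e = e ∧ e ≠ 0 ∧
    ∀ a b : MonoidAlgebra ℚ Γ, (∀ α, a * α = α * a) → (∀ α, b * α = α * b) →
      a * a = a → b * b = b → a * b = 0 → a + b = e → a = 0 ∨ b = 0

/-- `e_ℚ(χ)`: the primitive central idempotent of `ℚΓ` associated to the irreducible
character `χ`, i.e. the unique primitive central idempotent on which `χ` does not vanish. -/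
def eQchar {Γ : Type*} [Group Γ] [Fintype Γ] (χ : Γ → ℂ) : MonoidAlgebra ℚ Γ :=
  if h : ∃ e, IsPCI e ∧ extChar χ e ≠ 0 then h.choose else 0

/-- the embedding `ℚB → ℚG` for a subgroup `B` of `G`. -/
def emb (B : Subgroup G) : MonoidAlgebra ℚ B →+* MonoidAlgebra ℚ G :=
  MonoidAlgebra.mapDomainRingHom ℚ B.subtype

/-- the induced character `χ^Γ` of a character `χ` of a subgroup `N` of `Γ`. -/
def indChar {Γ : Type*} [Group Γ] [Fintype Γ] (N : Subgroup Γ) (χ : N → ℂ) : Γ → ℂ :=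
  fun g => (Nat.card N : ℂ)⁻¹ * ∑ x : Γ, if h : x * g * x⁻¹ ∈ N then χ ⟨x * g * x⁻¹, h⟩ else 0

/-- `λ` is a linear character of `H` with kernel `K`. -/
def IsLinCharKer (H K : Subgroup G) (lam : H →* ℂ) : Prop :=
  K ≤ H ∧ ∀ h : H, lam h = 1 ↔ (h : G) ∈ K

/-- given a linear character `lam` of `H ≤ G` and `H ≤ B`, the induced character `λ^B`
of the subgroup `B`. -/
def lamChar {H : Subgroup G} (lam : H →* ℂ) (B : Subgroup G) : B → ℂ :=
  indChar (H.subgroupOf B) (fun y => lam ⟨((y : B) : G), y.2⟩)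

/-- `e_ℚ(λ^B)` viewed as an element of `ℚG`. -/
def eQ {H : Subgroup G} (lam : H →* ℂ) (B : Subgroup G) : MonoidAlgebra ℚ G :=
  emb B (eQchar (lamChar lam B))

/-- `Cen_B(e)`: the centralizer of an element `e` of `ℚG` inside the subgroup `B`. -/
def cen (B : Subgroup G) (e : MonoidAlgebra ℚ G) : Subgroup G where
  carrier := {g | g ∈ B ∧ MonoidAlgebra.of ℚ G g * e = e * MonoidAlgebra.of ℚ G g}
  one_mem' := ⟨B.one_mem, by rw [map_one, one_mul, mul_one]⟩
  mul_mem' := by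
    rintro a b ⟨haB, ha⟩ ⟨hbB, hb⟩
    refine ⟨B.mul_mem haB hbB, ?_⟩
    rw [map_mul, mul_assoc, hb, ← mul_assoc, ha, mul_assoc]
  inv_mem' := by
    rintro a ⟨haB, ha⟩
    refine ⟨B.inv_mem haB, ?_⟩
    have h2 : MonoidAlgebra.of ℚ G a * MonoidAlgebra.of ℚ G a⁻¹ = 1 := by
      rw [← map_mul, mul_inv_cancel, map_one]
    have h1 : MonoidAlgebra.of ℚ G a⁻¹ * MonoidAlgebra.of ℚ G a = 1 := by
      rw [← map_mul, inv_mul_cancel, map_one]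
    have hu : Commute ((Units.mk (MonoidAlgebra.of ℚ G a)
        (MonoidAlgebra.of ℚ G a⁻¹) h2 h1 : (MonoidAlgebra ℚ G)ˣ) : MonoidAlgebra ℚ G) e := ha
    exact hu.units_inv_left

/-- the component `ℚB·e` of the group algebra, as a non-unital subring of `ℚG`. -/
def compIn (B : Subgroup G) (e : MonoidAlgebra ℚ G) : NonUnitalSubring (MonoidAlgebra ℚ G) :=
  NonUnitalSubring.closure (Set.range fun β : MonoidAlgebra ℚ B => emb B β * e)

/-- the center of the component `ℚB·e`, as a non-unital subring of `ℚG`. -/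
def centerCompNUS (B : Subgroup G) (e : MonoidAlgebra ℚ G) :
    NonUnitalSubring (MonoidAlgebra ℚ G) where
  carrier := {α | α ∈ compIn B e ∧ ∀ γ ∈ compIn B e, α * γ = γ * α}
  zero_mem' := ⟨zero_mem _, fun γ _ => by rw [zero_mul, mul_zero]⟩
  add_mem' := by
    rintro a b ⟨ha, ha'⟩ ⟨hb, hb'⟩
    exact ⟨add_mem ha hb, fun γ hγ => by rw [add_mul, mul_add, ha' γ hγ, hb' γ hγ]⟩
  neg_mem' := by
    rintro a ⟨ha, ha'⟩
    exact ⟨neg_mem ha, fun γ hγ => by rw [neg_mul, mul_neg, ha' γ hγ]⟩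
  mul_mem' := by
    rintro a b ⟨ha, ha'⟩ ⟨hb, hb'⟩
    refine ⟨mul_mem ha hb, fun γ hγ => ?_⟩
    rw [mul_assoc, hb' γ hγ, ← mul_assoc, ha' γ hγ, mul_assoc]

lemma conjEl_add (g : G) (α β : MonoidAlgebra ℚ G) :
    conjEl g (α + β) = conjEl g α + conjEl g β := by
  unfold conjEl; rw [mul_add, add_mul]

lemma conjEl_mul (g : G) (α β : MonoidAlgebra ℚ G) :
    conjEl g (α * β) = conjEl g α * conjEl g β := by
  unfold conjEl
  have h1 : MonoidAlgebra.of ℚ G g⁻¹ * MonoidAlgebra.of ℚ G g = 1 := by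
    rw [← map_mul, inv_mul_cancel, map_one]
  calc MonoidAlgebra.of ℚ G g * (α * β) * MonoidAlgebra.of ℚ G g⁻¹
      = MonoidAlgebra.of ℚ G g * α * ((MonoidAlgebra.of ℚ G g⁻¹ * MonoidAlgebra.of ℚ G g) *
        (β * MonoidAlgebra.of ℚ G g⁻¹)) := by rw [h1]; noncomm_ring
    _ = MonoidAlgebra.of ℚ G g * α * MonoidAlgebra.of ℚ G g⁻¹ *
        (MonoidAlgebra.of ℚ G g * β * MonoidAlgebra.of ℚ G g⁻¹) := by noncomm_ring

/-- the fixed points of the conjugation action of (members of) `C` on the center of the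
component `ℚB·e`, as a non-unital subring of `ℚG`. -/
def fixedCenter (B : Subgroup G) (e : MonoidAlgebra ℚ G) (C : Subgroup G) :
    NonUnitalSubring (MonoidAlgebra ℚ G) where
  carrier := {α | α ∈ centerCompNUS B e ∧ ∀ x ∈ C, conjEl x α = α}
  zero_mem' := ⟨zero_mem _, fun x _ => by unfold conjEl; rw [mul_zero, zero_mul]⟩
  add_mem' := by
    rintro a b ⟨ha, ha'⟩ ⟨hb, hb'⟩
    exact ⟨add_mem ha hb, fun x hx => by rw [conjEl_add, ha' x hx, hb' x hx]⟩
  neg_mem' := by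
    rintro a ⟨ha, ha'⟩
    refine ⟨neg_mem ha, fun x hx => ?_⟩
    have : conjEl x (-a) = - conjEl x a := by unfold conjEl; rw [mul_neg, neg_mul]
    rw [this, ha' x hx]
  mul_mem' := by
    rintro a b ⟨ha, ha'⟩ ⟨hb, hb'⟩
    exact ⟨mul_mem ha hb, fun x hx => by rw [conjEl_mul, ha' x hx, hb' x hx]⟩

/-- `(H,K)` is a Shoda pair of `G`. -/
def IsShodaPair (H K : Subgroup G) : Prop :=
  K ≤ H ∧ (∀ h ∈ H, ∀ x ∈ K, h * x * h⁻¹ ∈ K) ∧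
    (∃ h ∈ H, ∀ x ∈ H, ∃ n : ℤ, (h ^ n)⁻¹ * x ∈ K) ∧
    ∀ g : G, (∀ h ∈ H, h⁻¹ * g⁻¹ * h * g ∈ H → h⁻¹ * g⁻¹ * h * g ∈ K) → g ∈ H

/-- `c` is a strong inductive chain from `H` to `G` (with respect to the linear
character `lam` of `H`). -/
def IsStrongInductiveChain (H : Subgroup G) (lam : H →* ℂ) {n : ℕ}
    (c : Fin (n + 1) → Subgroup G) : Prop :=
  c 0 = H ∧ c (Fin.last n) = ⊤ ∧ Monotone c ∧
    ∀ i : Fin n,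
      NormalIn (c i.castSucc) (cen (c i.succ) (eQ lam (c i.castSucc))) ∧
      ∀ x ∈ c i.succ, ∀ y ∈ c i.succ,
        conjEl x (eQ lam (c i.castSucc)) ≠ conjEl y (eQ lam (c i.castSucc)) →
        conjEl x (eQ lam (c i.castSucc)) * conjEl y (eQ lam (c i.castSucc)) = 0

/-- `(H,K)` is a generalized strong Shoda pair of `G`, witnessed by the linear character
`lam` of `H` with kernel `K`. -/
def IsGSSPwith (H K : Subgroup G) (lam : H →* ℂ) : Prop :=
  IsShodaPair H K ∧ IsLinCharKer H K lam ∧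
    ∃ (n : ℕ) (c : Fin (n + 1) → Subgroup G), IsStrongInductiveChain H lam c

/-- `(H,K)` is a generalized strong Shoda pair of `G`. -/
def IsGSSP (H K : Subgroup G) : Prop :=
  ∃ lam : H →* ℂ, IsGSSPwith H K lam

/-- `χ` is an irreducible (complex) character of `Γ`. -/
def IsIrrChar (Γ : Type) [Group Γ] (χ : Γ → ℂ) : Prop :=
  ∃ V : FDRep ℂ Γ, CategoryTheory.Simple V ∧ V.character = χ

/-- `Γ` is a monomial group. -/
def IsMonomialGroup (Γ : Type) [Group Γ] [Fintype Γ] : Prop :=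
  ∀ χ : Γ → ℂ, IsIrrChar Γ χ →
    ∃ (N : Subgroup Γ) (lam : N →* ℂ), χ = indChar N fun h => lam h

/-- `G` is a generalized strongly monomial group. -/
def IsGenStronglyMonomial (G : Type) [Group G] [Fintype G] : Prop :=
  ∀ χ : G → ℂ, IsIrrChar G χ →
    ∃ (H K : Subgroup G) (lam : H →* ℂ), IsGSSPwith H K lam ∧
      χ = indChar H fun h => lam h

/-- `A` is a subnormal subgroup of `G`. -/
def Subnormal (A : Subgroup G) : Prop :=
  ∃ (n : ℕ) (c : Fin (n + 1) → Subgroup G), c 0 = A ∧ c (Fin.last n) = ⊤ ∧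
    ∀ i : Fin n, NormalIn (c i.castSucc) (c i.succ)

/-- the Bass unit (Bass cyclic unit) `u_{k,m}(g)`, written in `ℚG` (it has integral
coefficients when `k^m ≡ 1 mod |g|`). -/
def bassQ (g : G) (k m : ℕ) : MonoidAlgebra ℚ G :=
  (∑ i ∈ Finset.range k, MonoidAlgebra.of ℚ G g ^ i) ^ m +
    (((1 : ℚ) - (k : ℚ) ^ m) / (orderOf g : ℚ)) •
      ∑ i ∈ Finset.range (orderOf g), MonoidAlgebra.of ℚ G g ^ i

/-- the integral group ring `ℤB`, as a subring of `ℚG`. -/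
def intRing (B : Subgroup G) : Subring (MonoidAlgebra ℚ G) :=
  Subring.closure (Set.range fun b : B => MonoidAlgebra.of ℚ G (b : G))

/-- `α` is a unit of the integral group ring `ℤB`. -/
def IsUnitOfZ (B : Subgroup G) (α : MonoidAlgebra ℚ G) : Prop :=
  α ∈ intRing B ∧ ∃ β ∈ intRing B, α * β = 1 ∧ β * α = 1

/-- `Z(U(ℤB))`: the group of central units of `ℤB`, as a subgroup of `(ℚG)ˣ`. -/
def centralZUnits (B : Subgroup G) : Subgroup (MonoidAlgebra ℚ G)ˣ where
  carrier := {u | (u : MonoidAlgebra ℚ G) ∈ intRing B ∧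
    ((u⁻¹ : (MonoidAlgebra ℚ G)ˣ) : MonoidAlgebra ℚ G) ∈ intRing B ∧
    ∀ x ∈ intRing B, (u : MonoidAlgebra ℚ G) * x = x * u}
  one_mem' := ⟨one_mem _, by rw [inv_one]; exact ⟨one_mem _, fun x _ => by rw [Units.val_one, one_mul, mul_one]⟩⟩
  mul_mem' := by
    rintro a b ⟨ha1, ha2, ha3⟩ ⟨hb1, hb2, hb3⟩
    refine ⟨by rw [Units.val_mul]; exact mul_mem ha1 hb1, ?_, ?_⟩
    · rw [mul_inv_rev, Units.val_mul]; exact mul_mem hb2 ha2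
    · intro x hx
      rw [Units.val_mul, mul_assoc, hb3 x hx, ← mul_assoc, ha3 x hx, mul_assoc]
  inv_mem' := by
    rintro a ⟨ha1, ha2, ha3⟩
    refine ⟨ha2, by rw [inv_inv]; exact ha1, fun x hx => ?_⟩
    exact Commute.units_inv_left (ha3 x hx)

/-- the element `1 - M̂ + u_{k,m}(g)·M̂` of `ℚG`. -/
def genBassElt (M : Subgroup G) (g : G) (k m : ℕ) : MonoidAlgebra ℚ G :=
  1 - hat M + bassQ g k m * hat M

/-- `u` is a generalized Bass unit of `ℤB` based on some `g ∈ B` and the subgroup `M`: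
it is the minimal positive power of `1 - M̂ + u_{k,m}(g)·M̂` which is a unit of `ℤB`. -/
def IsGenBassUnitOf (B M : Subgroup G) (u : (MonoidAlgebra ℚ G)ˣ) : Prop :=
  ∃ g ∈ B, ∃ k m nn : ℕ, 0 < k ∧ 0 < m ∧ 0 < nn ∧ k ^ m ≡ 1 [MOD orderOf g] ∧
    (u : MonoidAlgebra ℚ G) = genBassElt M g k m ^ nn ∧
    IsUnitOfZ B (u : MonoidAlgebra ℚ G) ∧
    ∀ j : ℕ, 0 < j → j < nn → ¬ IsUnitOfZ B (genBassElt M g k m ^ j)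

/-- `u` is a Bass unit of `ℤG`. -/
def IsBassUnit (u : (MonoidAlgebra ℚ G)ˣ) : Prop :=
  ∃ (g : G) (k m : ℕ), 0 < k ∧ 0 < m ∧ k ^ m ≡ 1 [MOD orderOf g] ∧
    (u : MonoidAlgebra ℚ G) = bassQ g k m

/-- a (finitely generated) group `M` has (torsion-free) rank `r` iff it contains a free
abelian subgroup of rank `r` of finite index. -/
def HasRank (M : Type*) [Group M] (r : ℕ) : Prop :=
  ∃ f : Multiplicative (Fin r → ℤ) →* M, Function.Injective f ∧ f.range.index ≠ 0

/-- `(H,K)` realizes the primitive central idempotent `e` of `ℚG`. -/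
def RealizesIdem (H K : Subgroup G) (e : MonoidAlgebra ℚ G) : Prop :=
  ∃ lam : H →* ℂ, IsLinCharKer H K lam ∧ eQ lam ⊤ = e

/-- two pairs of subgroups realize the same primitive central idempotent of `ℚG`. -/
def SameIdem (p q : Subgroup G × Subgroup G) : Prop :=
  ∃ e, RealizesIdem p.1 p.2 e ∧ RealizesIdem q.1 q.2 e

/-- `S` is a complete and irredundant set of generalized strong Shoda pairs of `G`. -/
def IsCompleteIrredundantGSSP (S : Finset (Subgroup G × Subgroup G)) : Prop :=
  (∀ p ∈ S, IsGSSP p.1 p.2) ∧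
  (∀ H K : Subgroup G, IsGSSP H K → ∃ q ∈ S, SameIdem (H, K) q) ∧
  (∀ p ∈ S, ∀ q ∈ S, SameIdem p q → p = q)

/-- the center of the component `ℚG·e` is a totally real field: every embedding of it
into `ℂ` has real image. -/
def IsTotallyRealCenter (B : Subgroup G) (e : MonoidAlgebra ℚ G) : Prop :=
  ∀ f : centerCompNUS B e →ₙ+* ℂ, f ≠ 0 → ∀ α, (f α).im = 0

/-- `T` is a right transversal of `C` in `B`. -/
def IsRightTransversal (C B : Subgroup G) (T : Finset G) : Prop :=
  (T : Set G) ⊆ (B : Set G) ∧ ∀ b ∈ B, ∃! t, t ∈ T ∧ b * t⁻¹ ∈ C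

/-- `x^g = g⁻¹ x g`. -/
def zconj (g : G) (α : MonoidAlgebra ℚ G) : MonoidAlgebra ℚ G :=
  MonoidAlgebra.of ℚ G g⁻¹ * α * MonoidAlgebra.of ℚ G g

/-- `∏_{c ∈ C} α^c`. -/
def innerProd (C : Subgroup G) (α : MonoidAlgebra ℚ G) : MonoidAlgebra ℚ G :=
  ((Finset.univ : Finset C).toList.map fun c => zconj (c : G) α).prod

/-- `∏_{t ∈ T} α^t`. -/
def outerProd (T : Finset G) (α : MonoidAlgebra ℚ G) : MonoidAlgebra ℚ G :=
  (T.toList.map fun t => zconj t α).prod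

/-- the iterated construction `z^{N}(u)` along a list of pairs (centralizer, transversal). -/
def zIterAux : List (Subgroup G × Finset G) → MonoidAlgebra ℚ G → MonoidAlgebra ℚ G
  | [], α => α
  | p :: rest, α => zIterAux rest (outerProd p.2 (innerProd p.1 α))

/-- the iterated construction `c^{N}(u)` along a list of transversals. -/
def cIterAux : List (Finset G) → MonoidAlgebra ℚ G → MonoidAlgebra ℚ G
  | [], α => α
  | T :: rest, α => cIterAux rest (outerProd T α)


/-
The class sums `K_n = ∑_{g ∈ N} g n g⁻¹` are central in `ℚN`, so `K_n e` lies in the centre of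
`ℚN e`, where `e = e_ℚ(χ)`; so does `e` itself. Conjugation by `x` sends `K_n` to `K_{x n x⁻¹}`
and fixes `e`, hence `K_{x n x⁻¹} e = K_n e`. By Schur's lemma `e` acts as the identity on a
simple module affording `χ`, so applying the linear extension of `χ` gives
`|N| χ(x n x⁻¹) = |N| χ(n)`.
-/

lemma range_mulRight_lt_of_orthogonal {K R : Type*} [CommSemiring K] [Ring R] [Algebra K R]
    {a b : R} (ha : IsIdempotentElem a) (hb : IsIdempotentElem b) (hab : a * b = 0) (hb0 : b ≠ 0) :
    LinearMap.range (LinearMap.mulRight K a) < LinearMap.range (LinearMap.mulRight K (a + b)) := by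
  refine lt_of_le_of_ne ?_ fun h => hb0 ?_
  · rintro _ ⟨r, rfl⟩
    refine ⟨r * a, ?_⟩
    simp only [LinearMap.mulRight_apply, mul_add, mul_assoc, ha.eq, hab, mul_zero, add_zero]
  · obtain ⟨r, hr⟩ : a + b ∈ LinearMap.range (LinearMap.mulRight K a) :=
      h ▸ ⟨1, one_mul _⟩
    rw [LinearMap.mulRight_apply] at hr
    have := congrArg (· * b) hr
    simpa only [mul_assoc, hab, mul_zero, add_mul, hb.eq, zero_add] using this.symm

section GroupAlgebra

open Module CategoryTheory

variable {Γ : Type} [Group Γ] [Fintype Γ]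

lemma extChar_add (χ : Γ → ℂ) (α β : MonoidAlgebra ℚ Γ) :
    extChar χ (α + β) = extChar χ α + extChar χ β := by
  simp only [extChar, MonoidAlgebra.coeff_add, Finsupp.add_apply, Rat.cast_add, add_mul,
    Finset.sum_add_distrib]

lemma extChar_smul (χ : Γ → ℂ) (q : ℚ) (α : MonoidAlgebra ℚ Γ) :
    extChar χ (q • α) = q * extChar χ α := by
  simp [extChar, Finset.mul_sum, mul_assoc]

lemma extChar_of (χ : Γ → ℂ) (g : Γ) : extChar χ (MonoidAlgebra.of ℚ Γ g) = χ g := by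
  rw [extChar, Finset.sum_eq_single g (fun h _ hh => by simp [MonoidAlgebra.of_apply, hh])
    (by simp)]
  simp [MonoidAlgebra.of_apply]

lemma mul_comm_of_forall_of {z : MonoidAlgebra ℚ Γ}
    (hz : ∀ g : Γ, z * MonoidAlgebra.of ℚ Γ g = MonoidAlgebra.of ℚ Γ g * z) (α : MonoidAlgebra ℚ Γ) :
    z * α = α * z := by
  induction α using MonoidAlgebra.induction_on with
  | of g => exact hz g
  | add α β hα hβ => rw [mul_add, add_mul, hα, hβ]
  | smul q α hα => rw [mul_smul_comm, smul_mul_assoc, hα]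

lemma extChar_sum {ι : Type*} (χ : Γ → ℂ) (s : Finset ι) (f : ι → MonoidAlgebra ℚ Γ) :
    extChar χ (∑ i ∈ s, f i) = ∑ i ∈ s, extChar χ (f i) :=
  map_sum (AddMonoidHom.mk' (extChar χ) (extChar_add χ)) f s

def classSum (n : Γ) : MonoidAlgebra ℚ Γ := ∑ g : Γ, MonoidAlgebra.of ℚ Γ (g * n * g⁻¹)

lemma classSum_mul_comm (n : Γ) (α : MonoidAlgebra ℚ Γ) : classSum n * α = α * classSum n := by
  refine mul_comm_of_forall_of (fun h => ?_) α
  rw [classSum, Finset.sum_mul, Finset.mul_sum]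
  refine Fintype.sum_equiv (Equiv.mulLeft h⁻¹) _ _ fun g => ?_
  simp only [← map_mul, Equiv.coe_mulLeft]
  congr 1
  group

lemma extChar_classSum (V : FDRep ℂ Γ) (n : Γ) :
    extChar V.character (classSum n) = Fintype.card Γ * V.character n := by
  simp only [classSum, extChar_sum, extChar_of, FDRep.char_conj,
    Finset.sum_const, Finset.card_univ, nsmul_eq_mul]

lemma exists_isPCI_extChar_ne_zero (χ : Γ → ℂ) (hχ : χ 1 ≠ 0) :
    ∃ e, IsPCI e ∧ extChar χ e ≠ 0 := by
  -- a central idempotent on which `χ` does not vanish, with minimal ideal `ℚΓ e`, is primitive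
  obtain ⟨e, ⟨he, hee, hχe⟩, hmin⟩ :=
    (InvImage.wf (fun e : MonoidAlgebra ℚ Γ => LinearMap.range (LinearMap.mulRight ℚ e))
      wellFounded_lt).has_min
      {e | (∀ α, e * α = α * e) ∧ e * e = e ∧ extChar χ e ≠ 0}
      ⟨1, fun α => by rw [one_mul, mul_one], one_mul 1,
        by rwa [← map_one (MonoidAlgebra.of ℚ Γ), extChar_of]⟩
  refine ⟨e, ⟨he, hee, fun h => hχe (by simp [h, extChar]), ?_⟩, hχe⟩
  rintro a b ha hb haa hbb hab rfl
  rw [extChar_add] at hχe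
  by_cases hχa : extChar χ a = 0
  · rw [hχa, zero_add] at hχe
    refine .inl (by_contra fun ha0 => hmin b ⟨hb, hbb, hχe⟩ ?_)
    rw [add_comm]
    exact range_mulRight_lt_of_orthogonal hbb haa (by rw [hb, hab]) ha0
  · exact .inr (by_contra fun hb0 => hmin a ⟨ha, haa, hχa⟩
      (range_mulRight_lt_of_orthogonal haa hbb hab hb0))

lemma eQchar_spec {χ : Γ → ℂ} (hχ : χ 1 ≠ 0) :
    IsPCI (eQchar χ) ∧ extChar χ (eQchar χ) ≠ 0 := by
  have h := exists_isPCI_extChar_ne_zero χ hχ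
  unfold eQchar
  rw [dif_pos h]
  exact h.choose_spec

def algebraRep (V : FDRep ℂ Γ) : MonoidAlgebra ℚ Γ →+* Module.End ℂ V :=
  MonoidAlgebra.liftNCRingHom ((algebraMap ℂ _).comp (algebraMap ℚ ℂ)) V.ρ
    fun _ _ => Algebra.commute_algebraMap_left _ _

lemma algebraRep_of (V : FDRep ℂ Γ) (g : Γ) : algebraRep V (MonoidAlgebra.of ℚ Γ g) = V.ρ g := by
  rw [algebraRep, MonoidAlgebra.of_apply, MonoidAlgebra.liftNCRingHom_single]
  simp

lemma algebraRep_smul (V : FDRep ℂ Γ) (q : ℚ) (α : MonoidAlgebra ℚ Γ) :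
    algebraRep V (q • α) = (q : ℂ) • algebraRep V α := by
  rw [Algebra.smul_def, map_mul,
    show algebraMap ℚ (MonoidAlgebra ℚ Γ) q = MonoidAlgebra.single 1 q from rfl, algebraRep,
    MonoidAlgebra.liftNCRingHom_single, map_one, mul_one, RingHom.comp_apply, ← Algebra.smul_def]
  rfl

lemma trace_algebraRep (V : FDRep ℂ Γ) (β : MonoidAlgebra ℚ Γ) :
    LinearMap.trace ℂ V (algebraRep V β) = extChar V.character β := by
  induction β using MonoidAlgebra.induction_on with
  | of g => rw [algebraRep_of, extChar_of]; rfl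
  | add α β hα hβ => rw [map_add, map_add, hα, hβ, extChar_add]
  | smul q α hα => rw [algebraRep_smul, map_smul, hα, extChar_smul, smul_eq_mul]

lemma finrank_pos_of_simple (V : FDRep ℂ Γ) [Simple V] : 0 < finrank ℂ V := by
  by_contra! h
  have : Subsingleton V := finrank_zero_iff.mp (Nat.le_zero.mp h)
  exact id_nonzero V (Action.Hom.ext (by ext; exact Subsingleton.elim _ _))

lemma algebraRep_eq_smul_one_of_central (V : FDRep ℂ Γ) [Simple V] {z : MonoidAlgebra ℚ Γ}
    (hz : ∀ α, z * α = α * z) : ∃ c : ℂ, algebraRep V z = c • 1 := by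
  let f : V ⟶ V := ⟨⟨ModuleCat.ofHom (algebraRep V z)⟩, fun g => by
    ext v
    change algebraRep V z (V.ρ g v) = V.ρ g (algebraRep V z v)
    have := congrArg (fun α => algebraRep V α v) (hz (MonoidAlgebra.of ℚ Γ g))
    rw [map_mul, map_mul, algebraRep_of] at this
    exact this⟩
  obtain ⟨c, hc⟩ := endomorphism_simple_eq_smul_id ℂ f
  exact ⟨c, (congrArg (fun φ : V ⟶ V => φ.hom.hom.hom) hc).symm⟩

lemma IsIrrChar.apply_one_ne_zero {χ : Γ → ℂ} (hχ : IsIrrChar Γ χ) : χ 1 ≠ 0 := by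
  obtain ⟨V, _, rfl⟩ := hχ
  rw [FDRep.char_one]
  exact_mod_cast (finrank_pos_of_simple V).ne'

lemma algebraRep_eq_one_of_isIdempotentElem (V : FDRep ℂ Γ) [Simple V] {e : MonoidAlgebra ℚ Γ}
    (he : ∀ α, e * α = α * e) (hee : e * e = e) (hVe : extChar V.character e ≠ 0) :
    algebraRep V e = 1 := by
  obtain ⟨c, hc⟩ := algebraRep_eq_smul_one_of_central V he
  have htr : c * finrank ℂ V ≠ 0 := by
    rwa [← trace_algebraRep, hc, map_smul, LinearMap.trace_one, smul_eq_mul] at hVe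
  have hcc : c * (c * finrank ℂ V) = 1 * (c * finrank ℂ V) := by
    have := congrArg (LinearMap.trace ℂ V ∘ algebraRep V) hee
    simp only [Function.comp_apply, map_mul, hc, smul_mul_smul, one_mul, map_smul,
      LinearMap.trace_one, smul_eq_mul] at this
    linear_combination this
  rw [hc, mul_right_cancel₀ htr hcc, one_smul]

lemma extChar_mul_eQchar {χ : Γ → ℂ} (hχ : IsIrrChar Γ χ) (β : MonoidAlgebra ℚ Γ) :
    extChar χ (β * eQchar χ) = extChar χ β := by
  obtain ⟨⟨he, hee, -⟩, hχe⟩ := eQchar_spec hχ.apply_one_ne_zero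
  obtain ⟨V, _, rfl⟩ := hχ
  rw [← trace_algebraRep, map_mul, algebraRep_eq_one_of_isIdempotentElem V he hee hχe, mul_one,
    trace_algebraRep]

end GroupAlgebra

section Subgroup

variable {G : Type} [Group G] [Fintype G] {N : Subgroup G}

lemma emb_of (n : N) : emb N (MonoidAlgebra.of ℚ N n) = MonoidAlgebra.of ℚ G n := by
  simp [emb, MonoidAlgebra.of_apply, MonoidAlgebra.mapDomain_single]

lemma emb_injective : Function.Injective (emb (G := G) N) :=
  MonoidAlgebra.mapDomain_injective N.subtype_injective

lemma emb_mul_mem_centerCompNUS {β e : MonoidAlgebra ℚ N} (hβ : ∀ α, β * α = α * β)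
    (he : ∀ α, e * α = α * e) : emb N (β * e) ∈ centerCompNUS N (emb N e) := by
  refine ⟨NonUnitalSubring.subset_closure ⟨β, (map_mul _ _ _).symm⟩, fun γ hγ => ?_⟩
  induction hγ using NonUnitalSubring.closure_induction with
  | mem γ hγ =>
    obtain ⟨α, rfl⟩ := hγ
    dsimp only
    rw [← map_mul, ← map_mul, ← map_mul, mul_assoc, he, ← mul_assoc, hβ, mul_assoc]
  | zero => rw [mul_zero, zero_mul]
  | add y z _ _ hy hz => rw [mul_add, add_mul, hy, hz]
  | neg y _ hy => rw [mul_neg, neg_mul, hy]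
  | mul y z _ _ hy hz => rw [← mul_assoc, hy, mul_assoc, hz, ← mul_assoc]

lemma conjEl_emb_classSum (hN : N.Normal) (x : G) (n : N) :
    conjEl x (emb N (classSum n)) = emb N (classSum ⟨x * n * x⁻¹, hN.conj_mem n n.2 x⟩) := by
  have := hN
  simp only [conjEl, classSum, map_sum, Finset.mul_sum, Finset.sum_mul, emb_of, ← map_mul]
  refine Fintype.sum_equiv (MulAut.conjNormal x).toEquiv _ _ fun g => ?_
  simp only [MulEquiv.toEquiv_eq_coe, MulEquiv.coe_toEquiv, MulAut.conjNormal_apply,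
    Subgroup.coe_mul, Subgroup.coe_inv]
  congr 1
  group

end Subgroup

theorem conj_char_eq_of_fixing_center_general
    (C : Type) [Group C] [Fintype C] (N : Subgroup C) (hN : N.Normal)
    (χ : N → ℂ) (hχ : IsIrrChar N χ) (x : C)
    (hfix : ∀ α ∈ centerCompNUS N (emb N (eQchar χ)), conjEl x α = α) :
    ∀ nn : N, χ ⟨x * ↑nn * x⁻¹, hN.conj_mem ↑nn nn.2 x⟩ = χ nn := by
  intro n
  obtain ⟨⟨he, -⟩, -⟩ := eQchar_spec hχ.apply_one_ne_zero
  have hfix_e : conjEl x (emb N (eQchar χ)) = emb N (eQchar χ) := by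
    simpa only [one_mul] using
      hfix _ (emb_mul_mem_centerCompNUS (β := 1) (fun α => by rw [one_mul, mul_one]) he)
  have hfix_S := hfix _ (emb_mul_mem_centerCompNUS (classSum_mul_comm n) he)
  rw [map_mul, conjEl_mul, conjEl_emb_classSum hN, hfix_e, ← map_mul, ← map_mul] at hfix_S
  have h := congrArg (extChar χ) (emb_injective hfix_S)
  rw [extChar_mul_eQchar hχ, extChar_mul_eQchar hχ] at h
  obtain ⟨V, _, rfl⟩ := hχ
  rw [extChar_classSum, extChar_classSum] at h
  exact mul_left_cancel₀ (by simp) h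

/-- If `N ⊴ C`, `χ` is an irreducible character of `N`, and `x ∈ C`
centralizes `e_ℚ(χ)` and fixes the center of `ℚN e_ℚ(χ)` pointwise under conjugation,
then `χ^x = χ`. -/
theorem conj_char_eq_of_fixing_center
    (C : Type) [Group C] [Fintype C] (N : Subgroup C) (hN : N.Normal)
    (χ : N → ℂ) (hχ : IsIrrChar N χ) (x : C)
    (hx : MonoidAlgebra.of ℚ C x * emb N (eQchar χ) =
      emb N (eQchar χ) * MonoidAlgebra.of ℚ C x)
    (hfix : ∀ α ∈ centerCompNUS N (emb N (eQchar χ)), conjEl x α = α) :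
    ∀ nn : N, χ ⟨x * ↑nn * x⁻¹, hN.conj_mem ↑nn nn.2 x⟩ = χ nn :=
  conj_char_eq_of_fixing_center_general C N hN χ hχ x hfix

end PaperGSM
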